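/- For a binomial random variable X ~ B(n, p) and any integer x with 0 ≤ x ≤ n·p, the cumulative distribution function satisfies F(x; n, p) = Pr(X ≤ x) ≤ exp(-n·D(x/n ‖ p)), where D(a ‖ p) = a·log(a/p) + (1-a)·log((1-a)/(1-p)). -/
import Mathlib

open Real Finset

lemma aux_core (n x j : ℕ) (p a : ℝ) (hp : 0 < p) (hq : 0 < 1 - p)
    (ha0 : 0 < a) (ha1 : a < 1) (hap : a ≤ p) (hjx : j ≤ x) (hxn : x ≤ n) :
    p ^ j * (1 - p) ^ (n - j) * (a ^ x * (1 - a) ^ (n - x)) ≤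
      p ^ x * (1 - p) ^ (n - x) * (a ^ j * (1 - a) ^ (n - j)) := by
  obtain ⟨d, rfl⟩ := Nat.exists_eq_add_of_le hjx
  have h1 : n - j = (n - (j + d)) + d := by omega
  rw [h1, pow_add, pow_add, pow_add, pow_add]
  have ha1' : (0:ℝ) < 1 - a := by linarith
  have key : ((1 - p) * a) ^ d ≤ (p * (1 - a)) ^ d := by
    apply pow_le_pow_left₀ (by positivity)
    nlinarith
  have h2 := mul_le_mul_of_nonneg_left key
    (show (0:ℝ) ≤ p ^ j * (1 - p) ^ (n - (j + d)) * (a ^ j * (1 - a) ^ (n - (j + d))) by positivity)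
  rw [mul_pow, mul_pow] at h2
  nlinarith [h2]

/-- Chernoff–Hoeffding lower-tail bound for the binomial distribution:
for `X ~ B(n,p)` and integer `0 ≤ x ≤ n·p`,
`Pr(X ≤ x) = ∑_{j=0}^{x} C(n,j) p^j (1-p)^{n-j} ≤ exp(-n · D(x/n ‖ p))`,
where `D(a‖p) = a·log(a/p) + (1-a)·log((1-a)/(1-p))`. -/
theorem binomial_cdf_chernoff (n x : ℕ) (p : ℝ) (hp : 0 < p) (hp1 : p < 1)
    (hx : (x : ℝ) ≤ n * p) :
    ∑ j ∈ Finset.range (x + 1), (n.choose j : ℝ) * p ^ j * (1 - p) ^ (n - j) ≤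
      Real.exp (-(n : ℝ) *
        ((x / n) * Real.log ((x / n) / p) +
          (1 - x / n) * Real.log ((1 - x / n) / (1 - p)))) := by
  have hq : (0:ℝ) < 1 - p := by linarith
  rcases Nat.eq_zero_or_pos n with hn | hn
  · subst hn
    have hx0 : x = 0 := by
      have h : (x:ℝ) ≤ 0 := by simpa using hx
      exact_mod_cast Nat.le_zero.mp (by exact_mod_cast h)
    subst hx0
    simp
  · have hn' : (0:ℝ) < n := by exact_mod_cast hn
    have hxn : x ≤ n := by
      have : (x:ℝ) ≤ n := le_trans hx (by nlinarith)
      exact_mod_cast this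
    obtain ⟨a, ha_def⟩ : ∃ a : ℝ, a = x / n := ⟨_, rfl⟩
    rw [← ha_def]
    have hap : a ≤ p := by
      rw [ha_def, div_le_iff₀ hn']
      linarith [hx]
    have ha1 : a < 1 := lt_of_le_of_lt hap hp1
    have ha1' : (0:ℝ) < 1 - a := by linarith
    have hna : (n:ℝ) * a = x := by
      rw [ha_def]; field_simp
    have hn1a : (n:ℝ) * (1 - a) = ((n - x : ℕ) : ℝ) := by
      rw [Nat.cast_sub hxn, ha_def]; field_simp
    rcases Nat.eq_zero_or_pos x with hx0 | hxpos
    · subst hx0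
      have ha0 : a = 0 := by simp [ha_def]
      rw [ha0]
      simp only [zero_add, Finset.sum_range_one, Nat.choose_zero_right, pow_zero,
        Nat.cast_one, one_mul, Nat.sub_zero, zero_mul, sub_zero, mul_one, Nat.cast_zero,
        zero_add]
      rw [Real.log_div one_ne_zero hq.ne', Real.log_one,
        show -(n:ℝ) * (0 - Real.log (1 - p)) = (n:ℝ) * Real.log (1 - p) by ring,
        Real.exp_nat_mul, Real.exp_log hq]
    · have hxR : (0:ℝ) < x := by exact_mod_cast hxpos
      have ha0 : 0 < a := by rw [ha_def]; positivity
      -- the multiplying factor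
      obtain ⟨F, hF⟩ : ∃ F : ℝ, F = (p / a) ^ x * ((1 - p) / (1 - a)) ^ (n - x) := ⟨_, rfl⟩
      have hFpos : 0 < F := by rw [hF]; positivity
      -- step C : exp expression equals F
      have e1 : -(n:ℝ) * (a * Real.log (a / p) + (1 - a) * Real.log ((1 - a) / (1 - p)))
          = (x:ℝ) * Real.log (p / a) + ((n - x : ℕ) : ℝ) * Real.log ((1 - p) / (1 - a)) := by
        rw [Real.log_div ha0.ne' hp.ne', Real.log_div hp.ne' ha0.ne',
          Real.log_div ha1'.ne' hq.ne', Real.log_div hq.ne' ha1'.ne']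
        linear_combination (Real.log p - Real.log a) * hna +
          (Real.log (1 - p) - Real.log (1 - a)) * hn1a
      have hexp : Real.exp (-(n:ℝ) *
          (a * Real.log (a / p) + (1 - a) * Real.log ((1 - a) / (1 - p)))) = F := by
        rw [e1, Real.exp_add, Real.exp_nat_mul, Real.exp_nat_mul,
          Real.exp_log (by positivity : (0:ℝ) < p / a),
          Real.exp_log (by positivity : (0:ℝ) < (1 - p) / (1 - a)), hF]
      rw [hexp]
      -- step A: termwise bound
      have stepA : ∑ j ∈ Finset.range (x + 1), (n.choose j : ℝ) * p ^ j * (1 - p) ^ (n - j)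
          ≤ ∑ j ∈ Finset.range (x + 1), ((n.choose j : ℝ) * a ^ j * (1 - a) ^ (n - j)) * F := by
        apply Finset.sum_le_sum
        intro j hj
        have hjx : j ≤ x := Nat.lt_succ_iff.mp (Finset.mem_range.mp hj)
        have hEq : ((n.choose j : ℝ) * a ^ j * (1 - a) ^ (n - j)) * F
            = ((n.choose j : ℝ) * a ^ j * (1 - a) ^ (n - j) * (p ^ x * (1 - p) ^ (n - x)))
              / (a ^ x * (1 - a) ^ (n - x)) := by
          rw [hF, div_pow, div_pow]; ring
        rw [hEq, le_div_iff₀ (by positivity)]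
        have hC : (0:ℝ) ≤ (n.choose j : ℝ) := Nat.cast_nonneg _
        nlinarith [mul_le_mul_of_nonneg_left
          (aux_core n x j p a hp hq ha0 ha1 hap hjx hxn) hC]
      refine stepA.trans ?_
      rw [← Finset.sum_mul]
      have hbin : ∑ j ∈ Finset.range (n + 1), (n.choose j : ℝ) * a ^ j * (1 - a) ^ (n - j)
          = 1 := by
        have h := add_pow a (1 - a) n
        calc ∑ j ∈ Finset.range (n + 1), (n.choose j : ℝ) * a ^ j * (1 - a) ^ (n - j)
            = (a + (1 - a)) ^ n := by
              rw [h]; exact Finset.sum_congr rfl (fun k _ => by ring)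
          _ = 1 := by norm_num
      calc (∑ j ∈ Finset.range (x + 1), (n.choose j : ℝ) * a ^ j * (1 - a) ^ (n - j)) * F
          ≤ (∑ j ∈ Finset.range (n + 1), (n.choose j : ℝ) * a ^ j * (1 - a) ^ (n - j)) * F := by
            apply mul_le_mul_of_nonneg_right _ hFpos.le
            apply Finset.sum_le_sum_of_subset_of_nonneg
            · exact Finset.range_subset_range.mpr (by omega)
            · intro i _ _; positivity
        _ = F := by rw [hbin, one_mul]
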